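/- A tuple u = (u_1,…,u_S) of functions Ω → ℝ is a local minimizer of the relaxed Potts functional P_{γ,ρ} (i.e., there is ε > 0 such that P_{γ,ρ}(v) ≥ P_{γ,ρ}(u) for all v with ‖v − u‖₂ < ε) if and only if u minimizes the quadratic functional F_ρ(v) = Σ_{s=1}^S (1/S)‖Av_s − f‖₂² + ρ Σ_{1≤s<s'≤S} c_{s,s'}‖v_s − v_{s'}‖₂² over the pattern subspace V(u). -/

import Mathlib

/-!
Write `P_{γ,ρ} = F_ρ + γ J` with `J v = Σ_s ω_s ‖∇_{a_s} v_s‖₀`. Inside `V(u)` no new jumps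
appear, so `J ≤ J u` there, and a local minimum of `P_{γ,ρ}` at `u` is a local minimum of the
convex function `F_ρ` on the convex set `V(u)`, hence a global one. Conversely, every jump of `u`
survives small perturbations, so `J ≥ J u` near `u`; a nearby `v ∉ V(u)` even has an extra jump,
which costs at least `γ ω_s`, more than `F_ρ` can decrease close to `u` by continuity.
-/

open Finset

/-- The discrete image domain `Ω = {0,…,M−1} × {0,…,N−1} ⊆ ℤ²`. -/
noncomputable def gridDomain (M N : ℕ) : Finset (ℤ × ℤ) :=
  (Finset.Ico (0 : ℤ) (M : ℤ)) ×ˢ (Finset.Ico (0 : ℤ) (N : ℤ))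

/-- Pixels of the image domain. -/
abbrev Pix (M N : ℕ) := {p : ℤ × ℤ // p ∈ gridDomain M N}

/-- `‖∇_a u‖₀`: the number of pixels `p ∈ Ω` with `p + a ∈ Ω` and `u (p + a) ≠ u p`. -/
noncomputable def jumpCount (M N : ℕ) (u : Pix M N → ℝ) (a : ℤ × ℤ) : ℕ :=
  Set.ncard {p : Pix M N |
    ∃ h : (p : ℤ × ℤ) + a ∈ gridDomain M N, u ⟨(p : ℤ × ℤ) + a, h⟩ ≠ u p}

/-- Index set of pairs `s < s'`. -/
abbrev PairIdx (S : ℕ) := {q : Fin S × Fin S // q.1 < q.2}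

/-- The pattern subspace `V(u)`: tuples `v` that are constant wherever `u` is constant,
i.e. for every `s` and every pixel `p` with `p + a_s ∈ Ω`, `u_s(p+a_s) = u_s(p)`
implies `v_s(p+a_s) = v_s(p)`. -/
def patternSubspace (M N S : ℕ) (a : Fin S → ℤ × ℤ) (u : Fin S → Pix M N → ℝ) :
    Set (Fin S → Pix M N → ℝ) :=
  {v | ∀ (s : Fin S) (p : Pix M N) (hq : (p : ℤ × ℤ) + a s ∈ gridDomain M N),
    u s ⟨(p : ℤ × ℤ) + a s, hq⟩ = u s p → v s ⟨(p : ℤ × ℤ) + a s, hq⟩ = v s p}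

/-- The quadratic penalty relaxation
`P_{γ,ρ}(u) = Σ_s (1/S)‖Au_s − f‖₂² + γ Σ_s ω_s‖∇_{a_s}u_s‖₀
              + ρ Σ_{s<s'} c_{s,s'}‖u_s − u_{s'}‖₂²`. -/
noncomputable def relaxedPotts (M N m S : ℕ) (a : Fin S → ℤ × ℤ) (ω : Fin S → ℝ)
    (A : (Pix M N → ℝ) →ₗ[ℝ] (Fin m → ℝ)) (f : Fin m → ℝ) (γ ρ : ℝ)
    (c : Fin S → Fin S → ℝ) (u : Fin S → Pix M N → ℝ) : ℝ :=
  (∑ s, (1 / (S : ℝ)) * ∑ i, (A (u s) i - f i) ^ 2) +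
    γ * ∑ s, ω s * (jumpCount M N (u s) (a s) : ℝ) +
    ρ * ∑ q : PairIdx S, c (q : Fin S × Fin S).1 (q : Fin S × Fin S).2 *
      ∑ p, (u (q : Fin S × Fin S).1 p - u (q : Fin S × Fin S).2 p) ^ 2

/-- The quadratic part
`F_ρ(v) = Σ_s (1/S)‖Av_s − f‖₂² + ρ Σ_{s<s'} c_{s,s'}‖v_s − v_{s'}‖₂²`. -/
noncomputable def Frho (M N m S : ℕ)
    (A : (Pix M N → ℝ) →ₗ[ℝ] (Fin m → ℝ)) (f : Fin m → ℝ) (ρ : ℝ)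
    (c : Fin S → Fin S → ℝ) (v : Fin S → Pix M N → ℝ) : ℝ :=
  (∑ s, (1 / (S : ℝ)) * ∑ i, (A (v s) i - f i) ^ 2) +
    ρ * ∑ q : PairIdx S, c (q : Fin S × Fin S).1 (q : Fin S × Fin S).2 *
      ∑ p, (v (q : Fin S × Fin S).1 p - v (q : Fin S × Fin S).2 p) ^ 2

open Filter Topology Set

theorem ConvexOn.sum {𝕜 E β ι : Type*} [Semiring 𝕜] [PartialOrder 𝕜] [AddCommMonoid E]
    [AddCommMonoid β] [PartialOrder β] [IsOrderedAddMonoid β] [SMul 𝕜 E] [Module 𝕜 β]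
    {s : Set E} {t : Finset ι} {g : ι → E → β} (hs : Convex 𝕜 s)
    (hg : ∀ i ∈ t, ConvexOn 𝕜 s (g i)) : ConvexOn 𝕜 s fun x => ∑ i ∈ t, g i x := by
  classical
  induction t using Finset.induction_on with
  | empty => simpa using convexOn_const 0 hs
  | insert i t hi ih =>
    simp only [Finset.sum_insert hi]
    exact (hg i (mem_insert_self i t)).add (ih fun j hj => hg j (mem_insert_of_mem hj))

theorem convexOn_sq_sub {E : Type*} [AddCommGroup E] [Module ℝ E] (ℓ : E →ₗ[ℝ] ℝ) (b : ℝ) :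
    ConvexOn ℝ univ fun x => (ℓ x - b) ^ 2 :=
  even_two.convexOn_pow.comp_affineMap (ℓ.toAffineMap - AffineMap.const ℝ E b)

theorem exists_sum_sq_lt_iff_eventually_nhds {ι κ : Type*} [Fintype ι] [Fintype κ]
    (u : ι → κ → ℝ) (Q : (ι → κ → ℝ) → Prop) :
    (∃ ε > 0, ∀ v, ∑ i, ∑ j, (v i j - u i j) ^ 2 < ε ^ 2 → Q v) ↔ ∀ᶠ v in 𝓝 u, Q v := by
  constructor
  · rintro ⟨ε, hε, hQ⟩
    have hcont : Continuous fun v : ι → κ → ℝ => ∑ i, ∑ j, (v i j - u i j) ^ 2 := by fun_prop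
    have hu : ∑ i, ∑ j, (u i j - u i j) ^ 2 < ε ^ 2 := by simpa using pow_pos hε 2
    exact (hcont.continuousAt.eventually_lt continuousAt_const hu).mono hQ
  · intro h
    obtain ⟨ε, hε, hQ⟩ := Metric.eventually_nhds_iff.1 h
    refine ⟨ε, hε, fun v hv => hQ ?_⟩
    refine (dist_pi_lt_iff hε).2 fun i => (dist_pi_lt_iff hε).2 fun j => ?_
    have hterm : (v i j - u i j) ^ 2 ≤ ∑ i, ∑ j, (v i j - u i j) ^ 2 :=
      (single_le_sum (fun j _ => sq_nonneg (v i j - u i j)) (mem_univ j)).trans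
        (single_le_sum (f := fun i => ∑ j, (v i j - u i j) ^ 2)
          (fun i _ => sum_nonneg fun j _ => sq_nonneg _) (mem_univ i))
    exact Real.dist_eq _ _ ▸ abs_lt_of_sq_lt_sq (hterm.trans_lt hv) hε.le

def jumpSet (M N : ℕ) (w : Pix M N → ℝ) (b : ℤ × ℤ) : Set (Pix M N) :=
  {p | ∃ h : (p : ℤ × ℤ) + b ∈ gridDomain M N, w ⟨(p : ℤ × ℤ) + b, h⟩ ≠ w p}

theorem jumpCount_eq_ncard (M N : ℕ) (w : Pix M N → ℝ) (b : ℤ × ℤ) :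
    jumpCount M N w b = (jumpSet M N w b).ncard := rfl

theorem eventually_jumpSet_subset {M N : ℕ} {ι : Type*} [Finite ι] (u : ι → Pix M N → ℝ)
    (b : ι → ℤ × ℤ) : ∀ᶠ v in 𝓝 u, ∀ s, jumpSet M N (u s) (b s) ⊆ jumpSet M N (v s) (b s) := by
  refine eventually_all.2 fun s => eventually_all.2 fun p => ?_
  by_cases hp : p ∈ jumpSet M N (u s) (b s)
  · obtain ⟨hq, hne⟩ := hp
    have hcont : ContinuousAt (fun v : ι → Pix M N → ℝ => v s ⟨_, hq⟩ - v s p) u := by fun_prop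
    filter_upwards [hcont.eventually_ne (sub_ne_zero.2 hne)] with v hv _
    exact ⟨hq, sub_ne_zero.1 hv⟩
  · exact Eventually.of_forall fun v hp' => absurd hp' hp

section RelaxedPotts

variable {M N m S : ℕ} {a : Fin S → ℤ × ℤ} {ω : Fin S → ℝ}
  {A : (Pix M N → ℝ) →ₗ[ℝ] (Fin m → ℝ)} {f : Fin m → ℝ} {γ ρ : ℝ} {c : Fin S → Fin S → ℝ}
  {u v : Fin S → Pix M N → ℝ}

theorem mem_patternSubspace_self : u ∈ patternSubspace M N S a u :=
  fun _ _ _ h => h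

theorem convex_patternSubspace : Convex ℝ (patternSubspace M N S a u) := by
  intro v hv w hw α β _ _ _ s p hq heq
  simp only [Pi.add_apply, Pi.smul_apply, smul_eq_mul, hv s p hq heq, hw s p hq heq]

theorem jumpSet_subset_of_mem_patternSubspace (hv : v ∈ patternSubspace M N S a u) (s : Fin S) :
    jumpSet M N (v s) (a s) ⊆ jumpSet M N (u s) (a s) :=
  fun p ⟨hq, hne⟩ => ⟨hq, fun heq => hne (hv s p hq heq)⟩

theorem exists_jumpSet_ssubset_of_notMem_patternSubspace (hv : v ∉ patternSubspace M N S a u)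
    (h : ∀ s, jumpSet M N (u s) (a s) ⊆ jumpSet M N (v s) (a s)) :
    ∃ s, jumpSet M N (u s) (a s) ⊂ jumpSet M N (v s) (a s) := by
  simp only [patternSubspace, mem_ofPred_eq, not_forall] at hv
  obtain ⟨s, p, hq, heq, hne⟩ := hv
  exact ⟨s, (ssubset_iff_of_subset (h s)).2 ⟨p, ⟨hq, hne⟩, fun ⟨_, hne'⟩ => hne' heq⟩⟩

variable (M N S ω a) in
noncomputable def jumpPenalty (v : Fin S → Pix M N → ℝ) : ℝ :=
  ∑ s, ω s * (jumpCount M N (v s) (a s) : ℝ)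

theorem relaxedPotts_eq_Frho_add_jumpPenalty (v : Fin S → Pix M N → ℝ) :
    relaxedPotts M N m S a ω A f γ ρ c v =
      Frho M N m S A f ρ c v + γ * jumpPenalty M N S a ω v := by
  simp only [relaxedPotts, Frho, jumpPenalty]
  ring

theorem jumpCount_le_of_jumpSet_subset {w w' : Pix M N → ℝ} {b : ℤ × ℤ}
    (h : jumpSet M N w b ⊆ jumpSet M N w' b) : jumpCount M N w b ≤ jumpCount M N w' b := by
  simpa only [jumpCount_eq_ncard] using ncard_le_ncard h (toFinite _)

theorem jumpCount_lt_of_jumpSet_ssubset {w w' : Pix M N → ℝ} {b : ℤ × ℤ}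
    (h : jumpSet M N w b ⊂ jumpSet M N w' b) : jumpCount M N w b < jumpCount M N w' b := by
  simpa only [jumpCount_eq_ncard] using ncard_lt_ncard h (toFinite _)

theorem jumpPenalty_le_of_jumpSet_subset (hω : ∀ s, 0 ≤ ω s)
    (h : ∀ s, jumpSet M N (u s) (a s) ⊆ jumpSet M N (v s) (a s)) :
    jumpPenalty M N S a ω u ≤ jumpPenalty M N S a ω v :=
  sum_le_sum fun s _ =>
    mul_le_mul_of_nonneg_left (by exact_mod_cast jumpCount_le_of_jumpSet_subset (h s)) (hω s)

theorem jumpPenalty_add_le_of_jumpSet_ssubset (hω : ∀ s, 0 ≤ ω s)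
    (h : ∀ s, jumpSet M N (u s) (a s) ⊆ jumpSet M N (v s) (a s)) {s₀ : Fin S}
    (hs₀ : jumpSet M N (u s₀) (a s₀) ⊂ jumpSet M N (v s₀) (a s₀)) :
    jumpPenalty M N S a ω u + ω s₀ ≤ jumpPenalty M N S a ω v := by
  have hle : ∀ s, 0 ≤ (jumpCount M N (v s) (a s) : ℝ) - jumpCount M N (u s) (a s) := fun s =>
    sub_nonneg.2 (by exact_mod_cast jumpCount_le_of_jumpSet_subset (h s))
  have hlt : (1 : ℝ) ≤ jumpCount M N (v s₀) (a s₀) - jumpCount M N (u s₀) (a s₀) := by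
    rw [le_sub_iff_add_le']
    exact_mod_cast jumpCount_lt_of_jumpSet_ssubset hs₀
  have key : ω s₀ ≤ jumpPenalty M N S a ω v - jumpPenalty M N S a ω u :=
    calc ω s₀ ≤ ω s₀ * ((jumpCount M N (v s₀) (a s₀) : ℝ) - jumpCount M N (u s₀) (a s₀)) :=
          le_mul_of_one_le_right (hω s₀) hlt
      _ ≤ ∑ s, ω s * ((jumpCount M N (v s) (a s) : ℝ) - jumpCount M N (u s) (a s)) :=
          single_le_sum (fun s _ => mul_nonneg (hω s) (hle s)) (mem_univ s₀)
      _ = _ := by simp only [jumpPenalty, mul_sub, sum_sub_distrib]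
  linarith

theorem continuous_Frho : Continuous (Frho M N m S A f ρ c) := by
  have hA : Continuous A := A.continuous_of_finiteDimensional
  unfold Frho
  fun_prop

theorem convexOn_Frho (hρ : 0 ≤ ρ) (hc : ∀ s s', 0 ≤ c s s') :
    ConvexOn ℝ univ (Frho M N m S A f ρ c) := by
  let π (s : Fin S) : (Fin S → Pix M N → ℝ) →ₗ[ℝ] Pix M N → ℝ := LinearMap.proj s
  let ev (p : Pix M N) : (Pix M N → ℝ) →ₗ[ℝ] ℝ := LinearMap.proj p
  have data : ConvexOn ℝ univ fun v : Fin S → Pix M N → ℝ =>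
      ∑ s, (1 / (S : ℝ)) * ∑ i, (A (v s) i - f i) ^ 2 :=
    ConvexOn.sum convex_univ fun s _ => (ConvexOn.sum convex_univ fun i _ =>
      convexOn_sq_sub (LinearMap.proj i ∘ₗ A ∘ₗ π s) (f i)).smul (by positivity)
  have coupling : ConvexOn ℝ univ fun v : Fin S → Pix M N → ℝ =>
      ∑ q : PairIdx S, c (q : Fin S × Fin S).1 (q : Fin S × Fin S).2 *
        ∑ p, (v (q : Fin S × Fin S).1 p - v (q : Fin S × Fin S).2 p) ^ 2 :=
    ConvexOn.sum convex_univ fun q _ => (ConvexOn.sum convex_univ fun p _ => by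
      simpa [π, ev] using convexOn_sq_sub (ev p ∘ₗ (π q.1.1 - π q.1.2)) 0).smul (hc _ _)
  exact data.add (coupling.smul hρ)

theorem IsLocalMin.isMinOn_Frho (hγ : 0 ≤ γ) (hω : ∀ s, 0 ≤ ω s) (hρ : 0 ≤ ρ)
    (hc : ∀ s s', 0 ≤ c s s') (h : IsLocalMin (relaxedPotts M N m S a ω A f γ ρ c) u) :
    IsMinOn (Frho M N m S A f ρ c) (patternSubspace M N S a u) u := by
  refine .of_isLocalMinOn_of_convexOn mem_patternSubspace_self ?_
    ((convexOn_Frho hρ hc).subset (subset_univ _) convex_patternSubspace)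
  filter_upwards [h.on (patternSubspace M N S a u), self_mem_nhdsWithin] with v hP hv
  have hJ := jumpPenalty_le_of_jumpSet_subset hω (jumpSet_subset_of_mem_patternSubspace hv)
  rw [relaxedPotts_eq_Frho_add_jumpPenalty, relaxedPotts_eq_Frho_add_jumpPenalty] at hP
  linarith [mul_le_mul_of_nonneg_left hJ hγ]

theorem IsMinOn.isLocalMin_relaxedPotts (hγ : 0 < γ) (hω : ∀ s, 0 < ω s)
    (h : IsMinOn (Frho M N m S A f ρ c) (patternSubspace M N S a u) u) :
    IsLocalMin (relaxedPotts M N m S a ω A f γ ρ c) u := by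
  have hF : ∀ᶠ v in 𝓝 u, ∀ s, Frho M N m S A f ρ c u - γ * ω s < Frho M N m S A f ρ c v :=
    eventually_all.2 fun s => continuous_Frho.continuousAt.eventually_const_lt
      (sub_lt_self _ (mul_pos hγ (hω s)))
  filter_upwards [eventually_jumpSet_subset u a, hF] with v hJ hFv
  rw [relaxedPotts_eq_Frho_add_jumpPenalty, relaxedPotts_eq_Frho_add_jumpPenalty]
  by_cases hv : v ∈ patternSubspace M N S a u
  · have hJv := jumpPenalty_le_of_jumpSet_subset (fun s => (hω s).le) hJ
    linarith [isMinOn_iff.1 h v hv, mul_le_mul_of_nonneg_left hJv hγ.le]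
  · obtain ⟨s, hs⟩ := exists_jumpSet_ssubset_of_notMem_patternSubspace hv hJ
    have hJv := jumpPenalty_add_le_of_jumpSet_ssubset (fun s => (hω s).le) hJ hs
    linarith [hFv s, mul_le_mul_of_nonneg_left hJv hγ.le]

end RelaxedPotts

theorem local_min_relaxed_potts_iff_general (M N m S : ℕ)
    (a : Fin S → ℤ × ℤ)
    (ω : Fin S → ℝ) (hω : ∀ s, 0 < ω s)
    (A : (Pix M N → ℝ) →ₗ[ℝ] (Fin m → ℝ)) (f : Fin m → ℝ)
    (γ : ℝ) (hγ : 0 < γ) (ρ : ℝ) (hρ : 0 < ρ)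
    (c : Fin S → Fin S → ℝ) (hc : ∀ s s', 0 ≤ c s s')
    (u : Fin S → Pix M N → ℝ) :
    (∃ ε > (0 : ℝ), ∀ v : Fin S → Pix M N → ℝ,
        (∑ s, ∑ p, (v s p - u s p) ^ 2) < ε ^ 2 →
          relaxedPotts M N m S a ω A f γ ρ c u ≤ relaxedPotts M N m S a ω A f γ ρ c v)
      ↔ (∀ v ∈ patternSubspace M N S a u,
          Frho M N m S A f ρ c u ≤ Frho M N m S A f ρ c v) := by
  rw [exists_sum_sq_lt_iff_eventually_nhds]
  change IsLocalMin (relaxedPotts M N m S a ω A f γ ρ c) u ↔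
    IsMinOn (Frho M N m S A f ρ c) (patternSubspace M N S a u) u
  exact ⟨fun h => h.isMinOn_Frho hγ.le (fun s => (hω s).le) hρ.le hc,
    fun h => h.isLocalMin_relaxedPotts hγ hω⟩

/-- `u` is a local minimizer of the relaxed Potts functional `P_{γ,ρ}` if
and only if `u` minimizes the quadratic functional `F_ρ` over the pattern subspace
`V(u)`. -/
theorem local_min_relaxed_potts_iff (M N m S : ℕ)
    (hM : 1 ≤ M) (hN : 1 ≤ N) (hS : 1 ≤ S)
    (a : Fin S → ℤ × ℤ) (ha : ∀ s, a s ≠ 0)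
    (ω : Fin S → ℝ) (hω : ∀ s, 0 < ω s)
    (A : (Pix M N → ℝ) →ₗ[ℝ] (Fin m → ℝ)) (f : Fin m → ℝ)
    (γ : ℝ) (hγ : 0 < γ) (ρ : ℝ) (hρ : 0 < ρ)
    (c : Fin S → Fin S → ℝ) (hc : ∀ s s', 0 ≤ c s s')
    (u : Fin S → Pix M N → ℝ) :
    (∃ ε > (0 : ℝ), ∀ v : Fin S → Pix M N → ℝ,
        (∑ s, ∑ p, (v s p - u s p) ^ 2) < ε ^ 2 →
          relaxedPotts M N m S a ω A f γ ρ c u ≤ relaxedPotts M N m S a ω A f γ ρ c v)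
      ↔ (∀ v ∈ patternSubspace M N S a u,
          Frho M N m S A f ρ c u ≤ Frho M N m S A f ρ c v) :=
  local_min_relaxed_potts_iff_general M N m S a ω hω A f γ hγ ρ hρ c hc u
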